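/- Let d ≥ 1 and α > 1, and let ν be a Borel measure on ℝ^d such that ν(A) ≥ ∫_A |log₂ |z||^{2α} / |z|^d dz for every Borel set A contained in the unit ball B_1(0) = {z : |z| < 1}. Let g : ℝ^d → ℝ be bounded Borel measurable and suppose M := sup_{x ∈ ℝ^d} ∫_{ℝ^d} |g(x + z) − g(x)|² ν(dz) < ∞. Then there exist r₀ ∈ (0, 1/4) and a constant C > 0, both depending only on d and α, such that for every x ∈ ℝ^d and every 0 < r < r₀, ∫_{B_r(x)} |g(y) − ḡ_{x,r}|² dy ≤ C M r^d / |log₂ r|^{2α}, where ḡ_{x,r} := (1/|B_r(x)|) ∫_{B_r(x)} g(y) dy. -/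

import Mathlib

/-!
The ball average minimises the mean square deviation, so the left-hand side is at most
`∫_{B_r(x)} |g y - g x|² dy = ∫_{B_r(0)} |g (x + z) - g x|² dz`. The density
`|log₂ ρ|^{2α} / ρ^d` of the lower bound for `ν` is decreasing in `ρ ∈ (0, 1]`, so on `B_r(0)` it
is at least its value at `ρ = r`; hence this integral is at most `r^d / |log₂ r|^{2α}` times the
energy `∫ |g (x + z) - g x|² ν(dz) ≤ M`.
-/

open MeasureTheory

/-- The average of `g` over the open ball `B_r(x)` (w.r.t. Lebesgue measure). -/
noncomputable def ballAvg {d : ℕ} (g : EuclideanSpace ℝ (Fin d) → ℝ)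
    (x : EuclideanSpace ℝ (Fin d)) (r : ℝ) : ℝ :=
  (volume (Metric.ball x r)).toReal⁻¹ * ∫ y in Metric.ball x r, g y

open Metric Set ENNReal ProbabilityTheory

theorem integral_sq_sub_average_le {α : Type*} [MeasurableSpace α] (μ : Measure α)
    [IsFiniteMeasure μ] {g : α → ℝ} (hg : AEStronglyMeasurable g μ) (c : ℝ) :
    ∫ y, (g y - ⨍ y, g y ∂μ) ^ 2 ∂μ ≤ ∫ y, (g y - c) ^ 2 ∂μ := by
  rcases eq_zero_or_neZero μ with rfl | _
  · simp
  set π := (μ univ)⁻¹ • μ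
  have hgπ : AEStronglyMeasurable g π := hg.smul_measure _
  have hvar : Var[g; π] ≤ ∫ y, (g y - c) ^ 2 ∂π := by
    rw [← variance_sub_const hgπ c]
    exact variance_le_expectation_sq (hgπ.sub aestronglyMeasurable_const)
  have hmean : ∫ y, g y ∂π = ⨍ y, g y ∂μ := (average_eq' μ g).symm
  rw [variance_eq_integral hgπ.aemeasurable, hmean, integral_smul_measure,
    integral_smul_measure, smul_eq_mul, smul_eq_mul] at hvar
  exact le_of_mul_le_mul_left hvar (ENNReal.toReal_pos (by simp) (by simp [NeZero.ne μ]))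

theorem const_mul_setLIntegral_le_lintegral {α : Type*} [MeasurableSpace α] {μ ν : Measure α}
    {w f : α → ℝ≥0∞} {s : Set α} {c : ℝ≥0∞} (hw : Measurable w) (hf : Measurable f)
    (hs : MeasurableSet s)
    (hν : ∀ A, MeasurableSet A → A ⊆ s → ∫⁻ z in A, w z ∂μ ≤ ν A)
    (hc : ∀ z ∈ s, f z ≠ 0 → c ≤ w z) :
    c * ∫⁻ z in s, f z ∂μ ≤ ∫⁻ z, f z ∂ν := by
  have hle : (μ.withDensity w).restrict s ≤ ν := Measure.le_iff.2 fun A hA => by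
    rw [Measure.restrict_apply hA, withDensity_apply _ (hA.inter hs)]
    exact (hν _ (hA.inter hs) inter_subset_right).trans (measure_mono inter_subset_left)
  calc c * ∫⁻ z in s, f z ∂μ = ∫⁻ z in s, c * f z ∂μ := (lintegral_const_mul c hf).symm
    _ ≤ ∫⁻ z in s, w z * f z ∂μ := setLIntegral_mono' hs fun z hz => by
        by_cases hfz : f z = 0
        · simp [hfz]
        · exact mul_le_mul_left (hc z hz hfz) _
    _ = ∫⁻ z, f z ∂(μ.withDensity w).restrict s := by
        rw [restrict_withDensity hs, lintegral_withDensity_eq_lintegral_mul _ hw hf]; rfl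
    _ ≤ ∫⁻ z, f z ∂ν := lintegral_mono' hle le_rfl

theorem setLIntegral_ball_eq_setLIntegral_ball_zero {E : Type*} [NormedAddCommGroup E]
    [MeasurableSpace E] [BorelSpace E] (μ : Measure E) [μ.IsAddLeftInvariant]
    (F : E → ℝ≥0∞) (x : E) (r : ℝ) :
    ∫⁻ y in ball x r, F y ∂μ = ∫⁻ z in ball 0 r, F (x + z) ∂μ := by
  rw [← sub_self x, ← preimage_add_ball,
    (measurePreserving_add_left μ x).setLIntegral_comp_preimage_emb
      (MeasurableEquiv.addLeft x).measurableEmbedding]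

noncomputable def logKernel (d : ℕ) (p ρ : ℝ) : ℝ := |Real.logb 2 ρ| ^ p / ρ ^ d

theorem logKernel_pos (d : ℕ) (p : ℝ) {ρ : ℝ} (h₀ : 0 < ρ) (h₁ : ρ < 1) :
    0 < logKernel d p ρ :=
  div_pos (Real.rpow_pos_of_pos (abs_pos.2 (Real.logb_neg one_lt_two h₀ h₁).ne) p)
    (pow_pos h₀ d)

@[fun_prop]
theorem measurable_logKernel (d : ℕ) (p : ℝ) : Measurable (logKernel d p) := by
  unfold logKernel Real.logb
  fun_prop

theorem logKernel_antitoneOn (d : ℕ) {p : ℝ} (hp : 0 ≤ p) :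
    AntitoneOn (logKernel d p) (Ioc 0 1) := by
  intro a ⟨ha₀, _⟩ b ⟨hb₀, hb₁⟩ hab
  have hlog : |Real.logb 2 b| ≤ |Real.logb 2 a| := by
    rw [abs_of_nonpos (Real.logb_nonpos one_lt_two hb₀.le hb₁),
      abs_of_nonpos (Real.logb_nonpos one_lt_two ha₀.le (hab.trans hb₁))]
    exact neg_le_neg (Real.logb_le_logb_of_le one_lt_two ha₀ hab)
  exact div_le_div₀ (by positivity) (Real.rpow_le_rpow (abs_nonneg _) hlog hp) (pow_pos ha₀ d)
    (pow_le_pow_left₀ ha₀.le hab d)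

theorem logKernel_mul_setIntegral_sq_sub_center_le {E : Type*} [NormedAddCommGroup E]
    [MeasurableSpace E] [BorelSpace E] {μ ν : Measure E} [μ.IsAddLeftInvariant] {d : ℕ} {p : ℝ}
    (hp : 0 ≤ p)
    (hν : ∀ A, MeasurableSet A → A ⊆ ball 0 1 →
      ∫⁻ z in A, ENNReal.ofReal (logKernel d p ‖z‖) ∂μ ≤ ν A)
    {g : E → ℝ} (hg : Measurable g) {M : ℝ} (hM : 0 ≤ M) (x : E)
    (hx : ∫⁻ z, ENNReal.ofReal ((g (x + z) - g x) ^ 2) ∂ν ≤ ENNReal.ofReal M)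
    {r : ℝ} (hr₀ : 0 < r) (hr₁ : r < 1) :
    logKernel d p r * ∫ y in ball x r, (g y - g x) ^ 2 ∂μ ≤ M := by
  set F : E → ℝ≥0∞ := fun z => ENNReal.ofReal ((g (x + z) - g x) ^ 2)
  have hF : Measurable F := by fun_prop
  have hweight :
      ENNReal.ofReal (logKernel d p r) * ∫⁻ z in ball 0 r, F z ∂μ ≤ ∫⁻ z, F z ∂ν := by
    refine const_mul_setLIntegral_le_lintegral (by fun_prop) hF measurableSet_ball
      (fun A hA hAr => hν A hA (hAr.trans (ball_subset_ball hr₁.le))) fun z hz hFz => ?_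
    -- the kernel is junk (`0`) at the origin, but there the integrand vanishes
    have hz₀ : z ≠ 0 := by rintro rfl; simp [F] at hFz
    rw [mem_ball_zero_iff] at hz
    exact ENNReal.ofReal_le_ofReal <| logKernel_antitoneOn d hp
      ⟨norm_pos_iff.2 hz₀, (hz.trans hr₁).le⟩ ⟨hr₀, hr₁.le⟩ hz.le
  have hintegral :
      ∫ y in ball x r, (g y - g x) ^ 2 ∂μ = (∫⁻ z in ball 0 r, F z ∂μ).toReal := by
    rw [integral_eq_lintegral_of_nonneg_ae (ae_of_all _ fun _ => sq_nonneg _) (by fun_prop),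
      setLIntegral_ball_eq_setLIntegral_ball_zero]
  rw [hintegral, ← ENNReal.toReal_ofReal (logKernel_pos d p hr₀ hr₁).le, ← ENNReal.toReal_mul]
  exact ENNReal.toReal_le_of_le_ofReal hM (hweight.trans hx)

theorem nonlocal_energy_implies_log_campanato_general
    (d : ℕ) (α : ℝ) (hα : 1 < α) :
    ∃ r₀ : ℝ, 0 < r₀ ∧ r₀ < 1 / 4 ∧ ∃ C > (0 : ℝ),
      ∀ (ν : Measure (EuclideanSpace ℝ (Fin d))),
        (∀ A : Set (EuclideanSpace ℝ (Fin d)), MeasurableSet A →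
          A ⊆ Metric.ball 0 1 →
          ∫⁻ z in A, ENNReal.ofReal (|Real.logb 2 ‖z‖| ^ (2 * α) / ‖z‖ ^ d) ≤ ν A) →
      ∀ (g : EuclideanSpace ℝ (Fin d) → ℝ), Measurable g → (∃ B, ∀ x, |g x| ≤ B) →
      ∀ M : ℝ, 0 ≤ M →
        (∀ x, ∫⁻ z, ENNReal.ofReal ((g (x + z) - g x) ^ 2) ∂ν ≤ ENNReal.ofReal M) →
        ∀ x, ∀ r : ℝ, 0 < r → r < r₀ →
          ∫ y in Metric.ball x r, (g y - ballAvg g x r) ^ 2 ≤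
            C * M * r ^ d / |Real.logb 2 r| ^ (2 * α) := by
  refine ⟨1 / 8, by norm_num, by norm_num, 1, one_pos, ?_⟩
  intro ν hν g hg _ M hM hen x r hr₀ hr
  have hr₁ : r < 1 := by linarith
  have hkernel :=
    logKernel_mul_setIntegral_sq_sub_center_le (by linarith) hν hg hM x (hen x) hr₀ hr₁
  have havg : ballAvg g x r = ⨍ y in ball x r, g y := by
    rw [setAverage_eq, measureReal_def]; rfl
  have hvar :
      ∫ y in ball x r, (g y - ballAvg g x r) ^ 2 ≤ ∫ y in ball x r, (g y - g x) ^ 2 := by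
    have : IsFiniteMeasure (volume.restrict (ball x r)) :=
      isFiniteMeasure_restrict.2 measure_ball_lt_top.ne
    rw [havg]
    exact integral_sq_sub_average_le _ hg.aestronglyMeasurable _
  rw [one_mul, ← div_div_eq_mul_div]
  exact hvar.trans ((le_div_iff₀' (logKernel_pos d _ hr₀ hr₁)).2 hkernel)

theorem nonlocal_energy_implies_log_campanato
    (d : ℕ) (hd : 1 ≤ d) (α : ℝ) (hα : 1 < α) :
    ∃ r₀ : ℝ, 0 < r₀ ∧ r₀ < 1 / 4 ∧ ∃ C > (0 : ℝ),
      ∀ (ν : Measure (EuclideanSpace ℝ (Fin d))),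
        (∀ A : Set (EuclideanSpace ℝ (Fin d)), MeasurableSet A →
          A ⊆ Metric.ball 0 1 →
          ∫⁻ z in A, ENNReal.ofReal (|Real.logb 2 ‖z‖| ^ (2 * α) / ‖z‖ ^ d) ≤ ν A) →
      ∀ (g : EuclideanSpace ℝ (Fin d) → ℝ), Measurable g → (∃ B, ∀ x, |g x| ≤ B) →
      ∀ M : ℝ, 0 ≤ M →
        (∀ x, ∫⁻ z, ENNReal.ofReal ((g (x + z) - g x) ^ 2) ∂ν ≤ ENNReal.ofReal M) →
        ∀ x, ∀ r : ℝ, 0 < r → r < r₀ →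
          ∫ y in Metric.ball x r, (g y - ballAvg g x r) ^ 2 ≤
            C * M * r ^ d / |Real.logb 2 r| ^ (2 * α) :=
  nonlocal_energy_implies_log_campanato_general d α hα
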